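/- In the three-node, three-label instance with edges (u,v), (v,w), (u,w) all of weight 5 and node costs c(u,1)=∞ (or a sufficiently large constant), c(v,3)=8, c(w,2)=∞, all other costs 0, the unique optimal integer labeling assigns label 3 to all three nodes with objective 8, while the fractional LP solution ū=(0,1/2,1/2), v̄=(1/2,1/2,0), w̄=(1/2,0,1/2) is feasible with objective 7.5 < 8; hence the LP relaxation is not tight on this instance. -/

import Mathlib

/-!
A labeling that is not constant disagrees on at least two edges of the triangle and so pays at
least `10 > 8`; the constant labelings `1` and `2` each pay `M` at some node. This leaves the
all-`3` labeling, of cost `8`, as the unique optimum. The fractional solution puts no mass on any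
costly label, and any two of its vectors are at half-ℓ₁ distance `1/2`, so its LP value is
`3 · 5 · 1/2 = 7.5`. Labels are `0`-indexed in the code, so label `3` is `2`.
-/

open Finset

variable {V L : Type*}

/-- `x` is a probability vector over the labels `L`. -/
def IsProbVec [Fintype L] (x : L → ℝ) : Prop :=
  (∀ i, 0 ≤ x i) ∧ ∑ i, x i = 1

/-- Half the ℓ₁ distance between two label vectors. -/
noncomputable def dL1 [Fintype L] (x y : L → ℝ) : ℝ :=
  (1 / 2) * ∑ i, |x i - y i|

/-- The LP relaxation objective of Uniform Metric Labeling. -/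
noncomputable def QLP [Fintype V] [Fintype L] (E : Finset (V × V))
    (c : V → L → ℝ) (w : V × V → ℝ) (μ : V → L → ℝ) : ℝ :=
  ∑ u, ∑ i, c u i * μ u i + ∑ e ∈ E, w e * dL1 (μ e.1) (μ e.2)

/-- The Uniform Metric Labeling objective. -/
def Q [Fintype V] [DecidableEq L] (E : Finset (V × V)) (c : V → L → ℝ)
    (w : V × V → ℝ) (g : V → L) : ℝ :=
  ∑ u, c u (g u) + ∑ e ∈ E.filter (fun e => g e.1 ≠ g e.2), w e

/-- The integer LP solution corresponding to a labeling `f`. -/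
def toVec [DecidableEq L] (f : V → L) : V → L → ℝ :=
  fun u i => if f u = i then 1 else 0

section Objective

variable [Fintype V] [DecidableEq L] (E : Finset (V × V)) (c : V → L → ℝ)
  (w : V × V → ℝ)

theorem Q_const (k : L) : Q E c w (fun _ => k) = ∑ u, c u k := by
  simp [Q]

theorem sum_cut_le_Q (hc : ∀ u i, 0 ≤ c u i) (h : V → L) :
    ∑ e ∈ E.filter (fun e => h e.1 ≠ h e.2), w e ≤ Q E c w h :=
  le_add_of_nonneg_left (sum_nonneg fun u _ => hc u _)

end Objective

def triangle : Finset (Fin 3 × Fin 3) := {(0, 1), (1, 2), (0, 2)}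

theorem two_le_card_filter_triangle [DecidableEq L] {h : Fin 3 → L} (hne : ∃ u v, h u ≠ h v) :
    2 ≤ #(triangle.filter fun e => h e.1 ≠ h e.2) := by
  have hnc : ¬(h 0 = h 1 ∧ h 1 = h 2) := by
    rintro ⟨h01, h12⟩
    obtain ⟨u, v, huv⟩ := hne
    fin_cases u <;> fin_cases v <;> simp_all
  rw [triangle, filter_insert, filter_insert, filter_singleton]
  grind

theorem two_mul_le_Q_triangle [DecidableEq L] {c : Fin 3 → L → ℝ} (hc : ∀ u i, 0 ≤ c u i)
    {a : ℝ} (ha : 0 ≤ a) {h : Fin 3 → L} (hne : ∃ u v, h u ≠ h v) :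
    2 * a ≤ Q triangle c (fun _ => a) h :=
  calc 2 * a ≤ #(triangle.filter fun e => h e.1 ≠ h e.2) * a := by
        gcongr; exact_mod_cast two_le_card_filter_triangle hne
    _ = ∑ e ∈ triangle.filter (fun e => h e.1 ≠ h e.2), a := by simp
    _ ≤ Q triangle c (fun _ => a) h := sum_cut_le_Q _ _ _ hc h

def triangleCost (M : ℝ) : Fin 3 → Fin 3 → ℝ := fun u i =>
  if u = 0 ∧ i = 0 then M else if u = 1 ∧ i = 2 then 8 else
  if u = 2 ∧ i = 1 then M else 0

noncomputable def triangleFractional : Fin 3 → Fin 3 → ℝ :=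
  ![![0, 1/2, 1/2], ![1/2, 1/2, 0], ![1/2, 0, 1/2]]

section Instance

variable {M : ℝ}

theorem triangleCost_nonneg (hM : 0 ≤ M) (u i : Fin 3) : 0 ≤ triangleCost M u i := by
  unfold triangleCost
  split_ifs <;> norm_num [hM]

theorem Q_triangle_const_two : Q triangle (triangleCost M) (fun _ => 5) (fun _ => 2) = 8 := by
  simp [Q_const, triangleCost]

theorem eight_lt_Q_triangle (hM : 8 < M) {h : Fin 3 → Fin 3} (hne : h ≠ fun _ => 2) :
    8 < Q triangle (triangleCost M) (fun _ => 5) h := by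
  by_cases hnc : ∃ u v, h u ≠ h v
  · have := two_mul_le_Q_triangle (triangleCost_nonneg (by linarith)) (a := 5) (by norm_num) hnc
    linarith
  · push Not at hnc
    obtain ⟨k, rfl⟩ : ∃ k, h = fun _ => k := ⟨h 0, funext fun u => hnc u 0⟩
    rw [Q_const]
    fin_cases k
    · simp [triangleCost]; linarith
    · simp [triangleCost]; linarith
    · exact absurd rfl hne

theorem isProbVec_triangleFractional (u : Fin 3) : IsProbVec (triangleFractional u) := by
  fin_cases u <;>
    simp [IsProbVec, triangleFractional, Fin.forall_fin_succ, Fin.sum_univ_three] <;> norm_num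

theorem QLP_triangle_triangleFractional :
    QLP triangle (triangleCost M) (fun _ => 5) triangleFractional = 7.5 := by
  simp [QLP, dL1, triangle, triangleFractional, triangleCost, Fin.sum_univ_three]
  norm_num [abs_of_nonneg]

end Instance

/-- The three-node triangle counterexample: a `(1,2)`-stable instance on which the
LP relaxation is fractional. The unique optimum labels everything `3` (index `2`)
with objective `8`, while the given fractional LP solution is feasible with
objective `7.5 < 8`. -/
theorem lp_not_tight_counterexample (M : ℝ) (hM : M > 100) :
    let E : Finset (Fin 3 × Fin 3) := {(0, 1), (1, 2), (0, 2)}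
    let w : Fin 3 × Fin 3 → ℝ := fun _ => 5
    let c : Fin 3 → Fin 3 → ℝ := fun u i =>
      if u = 0 ∧ i = 0 then M else if u = 1 ∧ i = 2 then 8 else
      if u = 2 ∧ i = 1 then M else 0
    let g : Fin 3 → Fin 3 := fun _ => 2
    let μ : Fin 3 → Fin 3 → ℝ := ![![0, 1/2, 1/2], ![1/2, 1/2, 0], ![1/2, 0, 1/2]]
    (∀ h : Fin 3 → Fin 3, h ≠ g → Q E c w g < Q E c w h) ∧
    Q E c w g = 8 ∧
    (∀ u, IsProbVec (μ u)) ∧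
    QLP E c w μ = 7.5 ∧
    QLP E c w μ < Q E c w g := by
  intro E w c g μ
  have hQg : Q E c w g = 8 := Q_triangle_const_two
  have hQLP : QLP E c w μ = 7.5 := QLP_triangle_triangleFractional
  refine ⟨fun h hne => ?_, hQg, isProbVec_triangleFractional, hQLP, by rw [hQg, hQLP]; norm_num⟩
  rw [hQg]
  exact eight_lt_Q_triangle (by linarith) hne
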